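/- arXiv:2307.16501 — 2 statements merged into one kernel-verified Lean document; each statement's English description precedes it below -/
import Mathlib

section
/- Let S be a simplicial affine semigroup in ℕ^d, d ≥ 2, minimally generated by A = {a_1,...,a_e} with extremal rays E = {a_1,...,a_d} (ℚ-linearly independent), with toric ideal I_A, and let 1 ≤ i < j ≤ d. Then (x_i, x_j) is a regular sequence on k[x]/I_A if and only if: for all b_1, b_2 ∈ Ap(S, a_i) ∩ Ap(S, a_j), if b_1 - b_2 ∈ ℤa_i + ℤa_j, then b_1 = b_2. -/
/-!
Write `k[S] ⊆ k[ℕ^d]` for the semigroup ring, the image of `x_n ↦ t^{a_n}`, so that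
`k[x]/I_A ≅ k[S]`. There `x_i` acts as the monomial `t^{a_i}`, a nonzerodivisor since `ℕ^d` is
cancellative, and `(x_i, x_j)` is proper because no element of it has a constant term. An element
of `k[S]` is divisible by `t^{a_i}` exactly when its support lies in `a_i + S`, so `x_j` is a
nonzerodivisor modulo `x_i` exactly when `b ↦ a_j + b` maps `Ap(S, a_i)` into itself.

Every element of `S` is `u a_i + v a_j + c` with `c ∈ Ap(S, a_i) ∩ Ap(S, a_j)`. If `a_j + ·`
preserves `Ap(S, a_i)`, comparing the `a_i`- and then the `a_j`-multiples in a relation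
`u a_i + v a_j + c = u' a_i + v' a_j + c'` gives `c = c'`. Conversely, if `a_j + b = a_i + s`
with `b ∈ Ap(S, a_i)`, decomposing `b` and `s` gives
`(v + 1) a_j + c = (u' + 1) a_i + v' a_j + c'`; the Apéry condition forces `c = c'`, leaving a
relation that the linear independence of `a_i, a_j` rules out.
-/

open MvPolynomial

noncomputable section

/-- The toric ideal of the family `a : Fin e → ℕ^d`. -/
def toricIdeal (k : Type*) [Field k] {e d : ℕ} (a : Fin e → (Fin d → ℕ)) :
    Ideal (MvPolynomial (Fin e) k) :=
  RingHom.ker (MvPolynomial.aeval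
    (fun i => AddMonoidAlgebra.single (a i) (1 : k)) :
      MvPolynomial (Fin e) k →ₐ[k] AddMonoidAlgebra k (Fin d → ℕ)).toRingHom

section AperySet

variable {M : Type*} [AddCancelCommMonoid M] {S : AddSubmonoid M} {x y : M}

/-- The Apéry set `Ap(S, x) = {b ∈ S | b - x ∉ S}`. -/
def aperySet (S : AddSubmonoid M) (x : M) : Set M :=
  {b | b ∈ S ∧ ¬ ∃ s ∈ S, b = x + s}

theorem mem_aperySet_inter_iff {b : M} :
    b ∈ aperySet S x ∩ aperySet S y ↔
      b ∈ S ∧ (¬ ∃ s ∈ S, b = x + s) ∧ (¬ ∃ s ∈ S, b = y + s) :=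
  ⟨fun h => ⟨h.1.1, h.1.2, h.2.2⟩, fun h => ⟨⟨h.1, h.2.1⟩, h.1, h.2.2⟩⟩

theorem nsmul_add_mem_aperySet (h : Set.MapsTo (y + ·) (aperySet S x) (aperySet S x))
    {b : M} (hb : b ∈ aperySet S x) (n : ℕ) : n • y + b ∈ aperySet S x := by
  simpa using h.iterate n hb

theorem le_of_nsmul_add_eq_nsmul_add (hx : x ∈ S) {c₁ c₂ : M} (h₁ : c₁ ∈ aperySet S x)
    (h₂ : c₂ ∈ S) {p q : ℕ} (h : p • x + c₁ = q • x + c₂) : q ≤ p := by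
  by_contra! hpq
  obtain ⟨r, rfl⟩ := Nat.exists_eq_add_of_lt hpq
  refine h₁.2 ⟨r • x + c₂, S.add_mem (S.nsmul_mem hx r) h₂, add_left_cancel (a := p • x) ?_⟩
  rw [h, add_nsmul, add_nsmul, one_nsmul]
  abel

theorem eq_of_mapsTo_add_aperySet (hx : x ∈ S) (hy : y ∈ S)
    (h : Set.MapsTo (y + ·) (aperySet S x) (aperySet S x)) {b₁ b₂ : M}
    (h₁ : b₁ ∈ aperySet S x ∩ aperySet S y) (h₂ : b₂ ∈ aperySet S x ∩ aperySet S y)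
    {p₁ p₂ q₁ q₂ : ℕ} (hb : p₁ • x + p₂ • y + b₁ = q₁ • x + q₂ • y + b₂) : b₁ = b₂ := by
  have hc₁ := nsmul_add_mem_aperySet h h₁.1 p₂
  have hc₂ := nsmul_add_mem_aperySet h h₂.1 q₂
  rw [add_assoc, add_assoc] at hb
  obtain rfl : p₁ = q₁ := le_antisymm (le_of_nsmul_add_eq_nsmul_add hx hc₂ hc₁.1 hb.symm)
    (le_of_nsmul_add_eq_nsmul_add hx hc₁ hc₂.1 hb)
  replace hb := add_left_cancel hb
  obtain rfl : p₂ = q₂ := le_antisymm (le_of_nsmul_add_eq_nsmul_add hy h₂.2 h₁.2.1 hb.symm)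
    (le_of_nsmul_add_eq_nsmul_add hy h₁.2 h₂.2.1 hb)
  exact add_left_cancel hb

variable [PartialOrder M] [CanonicallyOrderedAdd M] [WellFoundedLT M]

theorem exists_eq_nsmul_add_nsmul_add_mem_aperySet (hx : x ≠ 0) (hy : y ≠ 0) {b : M}
    (hb : b ∈ S) :
    ∃ u v : ℕ, ∃ c ∈ aperySet S x ∩ aperySet S y, b = u • x + v • y + c := by
  induction b using WellFoundedLT.induction with
  | _ b ih =>
  have lt_add {z : M} (hz : z ≠ 0) (s : M) : s < z + s :=
    lt_of_le_of_ne le_add_self fun h => hz (add_eq_right.1 h.symm)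
  by_cases hbx : ∃ s ∈ S, b = x + s
  · obtain ⟨s, hs, rfl⟩ := hbx
    obtain ⟨u, v, c, hc, rfl⟩ := ih _ (lt_add hx s) hs
    exact ⟨u + 1, v, c, hc, by rw [succ_nsmul]; abel⟩
  by_cases hby : ∃ s ∈ S, b = y + s
  · obtain ⟨s, hs, rfl⟩ := hby
    obtain ⟨u, v, c, hc, rfl⟩ := ih _ (lt_add hy s) hs
    exact ⟨u, v + 1, c, hc, by rw [succ_nsmul]; abel⟩
  exact ⟨0, 0, b, ⟨⟨hb, hbx⟩, hb, hby⟩, by simp⟩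

theorem mapsTo_add_aperySet_of_forall_eq (hx : x ∈ S) (hy : y ∈ S) (hy0 : y ≠ 0)
    (hxy : ∀ u v w : ℕ, u • x + v • y = w • y → u = 0)
    (h : ∀ b₁ b₂, b₁ ∈ aperySet S x ∩ aperySet S y → b₂ ∈ aperySet S x ∩ aperySet S y →
      (∃ p₁ p₂ q₁ q₂ : ℕ, p₁ • x + p₂ • y + b₁ = q₁ • x + q₂ • y + b₂) → b₁ = b₂) :
    Set.MapsTo (y + ·) (aperySet S x) (aperySet S x) := by
  rintro b ⟨hb, hbx⟩
  refine ⟨S.add_mem hy hb, ?_⟩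
  rintro ⟨s, hs, hys⟩
  have hx0 : x ≠ 0 := fun h0 => one_ne_zero (hxy 1 0 0 (by simp [h0]))
  obtain ⟨u, v, c, hc, rfl⟩ := exists_eq_nsmul_add_nsmul_add_mem_aperySet hx0 hy0 hb
  obtain ⟨u', v', c', hc', rfl⟩ := exists_eq_nsmul_add_nsmul_add_mem_aperySet hx0 hy0 hs
  obtain rfl : u = 0 := by
    by_contra! hu
    obtain ⟨w, rfl⟩ := Nat.exists_eq_succ_of_ne_zero hu
    refine hbx ⟨w • x + v • y + c, ?_, by rw [succ_nsmul]; abel⟩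
    exact S.add_mem (S.add_mem (S.nsmul_mem hx w) (S.nsmul_mem hy v)) hc.1.1
  have hrel : (v + 1) • y + c = (u' + 1) • x + v' • y + c' := by
    rw [zero_nsmul, zero_add] at hys
    rw [succ_nsmul, succ_nsmul]
    convert hys using 1 <;> abel_nf
  obtain rfl : c = c' := h c c' hc hc' ⟨0, v + 1, u' + 1, v', by rwa [zero_nsmul, zero_add]⟩
  exact Nat.succ_ne_zero u' (hxy _ _ _ (add_right_cancel hrel).symm)

theorem mapsTo_add_aperySet_iff (hx : x ∈ S) (hy : y ∈ S) (hy0 : y ≠ 0)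
    (hxy : ∀ u v w : ℕ, u • x + v • y = w • y → u = 0) :
    Set.MapsTo (y + ·) (aperySet S x) (aperySet S x) ↔
      ∀ b₁ b₂, b₁ ∈ aperySet S x ∩ aperySet S y → b₂ ∈ aperySet S x ∩ aperySet S y →
        (∃ p₁ p₂ q₁ q₂ : ℕ, p₁ • x + p₂ • y + b₁ = q₁ • x + q₂ • y + b₂) → b₁ = b₂ :=
  ⟨fun h _ _ h₁ h₂ ⟨_, _, _, _, hb⟩ => eq_of_mapsTo_add_aperySet hx hy h h₁ h₂ hb,
    mapsTo_add_aperySet_of_forall_eq hx hy hy0 hxy⟩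

end AperySet

section NatVectors

variable {ι : Type*} {x y : ι → ℕ}

theorem exists_zsmul_add_zsmul_eq_sub_iff {b₁ b₂ : ι → ℕ} :
    (∃ z₁ z₂ : ℤ, (fun t => (b₁ t : ℤ)) - (fun t => (b₂ t : ℤ)) =
        z₁ • (fun t => (x t : ℤ)) + z₂ • (fun t => (y t : ℤ))) ↔
      ∃ p₁ p₂ q₁ q₂ : ℕ, p₁ • x + p₂ • y + b₁ = q₁ • x + q₂ • y + b₂ := by
  constructor
  · rintro ⟨z₁, z₂, h⟩
    refine ⟨(-z₁).toNat, (-z₂).toNat, z₁.toNat, z₂.toNat, funext fun t => ?_⟩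
    have ht := congrFun h t
    have h₁ := z₁.toNat_sub_toNat_neg
    have h₂ := z₂.toNat_sub_toNat_neg
    simp only [Pi.sub_apply, Pi.add_apply, Pi.smul_apply, smul_eq_mul] at ht ⊢
    zify
    linear_combination ht - (x t : ℤ) * h₁ - (y t : ℤ) * h₂
  · rintro ⟨p₁, p₂, q₁, q₂, h⟩
    refine ⟨q₁ - p₁, q₂ - p₂, funext fun t => ?_⟩
    have ht := congrFun h t
    simp only [Pi.sub_apply, Pi.add_apply, Pi.smul_apply, smul_eq_mul] at ht ⊢
    zify at ht
    linear_combination ht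

theorem eq_zero_of_nsmul_add_nsmul_eq
    (h : LinearIndependent ℚ ![fun t => (x t : ℚ), fun t => (y t : ℚ)]) (u v w : ℕ)
    (huvw : u • x + v • y = w • y) : u = 0 := by
  have hq : (u : ℚ) • (fun t => (x t : ℚ)) + ((v : ℚ) - w) • (fun t => (y t : ℚ)) = 0 := by
    funext t
    have ht := congrFun huvw t
    simp only [Pi.add_apply, Pi.smul_apply, smul_eq_mul, Pi.zero_apply] at ht ⊢
    qify at ht
    linear_combination ht
  exact_mod_cast (LinearIndependent.pair_iff.1 h _ _ hq).1

theorem ne_zero_of_linearIndependent_pair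
    (h : LinearIndependent ℚ ![fun t => (x t : ℚ), fun t => (y t : ℚ)]) : y ≠ 0 := by
  rintro rfl
  exact h.ne_zero 1 (funext fun t => by simp)

end NatVectors

section ToricMap

variable (k : Type*) {σ M : Type*} [CommSemiring k] [AddCommMonoid M] (a : σ → M)

abbrev toricMap : MvPolynomial σ k →ₐ[k] AddMonoidAlgebra k M :=
  aeval fun n => AddMonoidAlgebra.single (a n) 1

variable {k a}

theorem toricMap_eq_mapDomain (g : MvPolynomial σ k) :
    toricMap k a g = AddMonoidAlgebra.mapDomain (Finsupp.linearCombination ℕ a) g := by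
  have : toricMap k a = AddMonoidAlgebra.mapDomainAlgHom k k
      (Finsupp.linearCombination ℕ a).toAddMonoidHom :=
    algHom_ext fun n => by rw [aeval_X]; simp [X, monomial]
  rw [this]
  rfl

theorem range_linearCombination_nat :
    Set.range (Finsupp.linearCombination ℕ a) = AddSubmonoid.closure (Set.range a) := by
  rw [← LinearMap.coe_range, Finsupp.range_linearCombination,
    ← Submodule.span_nat_eq_addSubmonoidClosure]
  rfl

theorem support_toricMap_subset (g : MvPolynomial σ k) :
    ↑(toricMap k a g).coeff.support ⊆ (AddSubmonoid.closure (Set.range a) : Set M) := by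
  classical
  rw [toricMap_eq_mapDomain, AddMonoidAlgebra.coeff_mapDomain, ← range_linearCombination_nat]
  exact (Finset.coe_subset.2 Finsupp.mapDomain_support).trans (by simp)

theorem exists_toricMap_eq {p : AddMonoidAlgebra k M}
    (hp : ↑p.coeff.support ⊆ (AddSubmonoid.closure (Set.range a) : Set M)) :
    ∃ g, toricMap k a g = p := by
  rw [← range_linearCombination_nat] at hp
  refine ⟨AddMonoidAlgebra.mapDomain (Function.invFun (Finsupp.linearCombination ℕ a)) p, ?_⟩
  refine AddMonoidAlgebra.coeff_injective ?_
  rw [toricMap_eq_mapDomain, AddMonoidAlgebra.coeff_mapDomain, AddMonoidAlgebra.coeff_mapDomain,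
    ← Finsupp.mapDomain_comp]
  conv_rhs => rw [← Finsupp.mapDomain_id (v := p.coeff)]
  exact Finsupp.mapDomain_congr fun t ht => Function.invFun_eq (hp ht)

theorem support_toricMap_X_mul [IsLeftCancelAdd M] (n : σ) (g : MvPolynomial σ k) :
    (toricMap k a (X n * g)).coeff.support =
      (toricMap k a g).coeff.support.map (addLeftEmbedding (a n)) := by
  rw [map_mul, aeval_X]
  exact AddMonoidAlgebra.support_coeff_single_mul _ _ (by simp) _

end ToricMap

section ToricIdeal

variable {k : Type*} [Field k] {e d : ℕ} {a : Fin e → Fin d → ℕ}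

theorem mem_toricIdeal_iff {g : MvPolynomial (Fin e) k} :
    g ∈ toricIdeal k a ↔ toricMap k a g = 0 :=
  RingHom.mem_ker

theorem mem_toricIdeal_of_X_mul_mem {n : Fin e} {g : MvPolynomial (Fin e) k}
    (h : X n * g ∈ toricIdeal k a) : g ∈ toricIdeal k a := by
  simpa [mem_toricIdeal_iff] using h

theorem mem_toricIdeal_sup_span_X_iff {n : Fin e} {g : MvPolynomial (Fin e) k} :
    g ∈ toricIdeal k a ⊔ Ideal.span {X n} ↔
      ∀ t ∈ (toricMap k a g).coeff.support, ∃ s ∈ AddSubmonoid.closure (Set.range a),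
        t = a n + s := by
  constructor
  · intro hg t ht
    obtain ⟨f, hf, _, hx, rfl⟩ := Submodule.mem_sup.1 hg
    obtain ⟨h, rfl⟩ := Ideal.mem_span_singleton'.1 hx
    rw [map_add, mem_toricIdeal_iff.1 hf, zero_add, mul_comm, support_toricMap_X_mul] at ht
    obtain ⟨s, hs, rfl⟩ := Finset.mem_map.1 ht
    exact ⟨s, support_toricMap_subset h hs, rfl⟩
  · intro hg
    set p := toricMap k a g
    obtain ⟨h, hh⟩ := exists_toricMap_eq (k := k) (a := a) (p := p.divOf (a n)) fun t ht => by
      obtain ⟨s, hs, hts⟩ := hg _ (by simpa using ht)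
      rwa [add_left_cancel hts]
    have hmod : p.modOf (a n) = 0 := by
      ext t
      by_cases ht : ∃ s, t = a n + s
      · obtain ⟨s, rfl⟩ := ht
        exact AddMonoidAlgebra.coeff_modOf_self_add _ _ _
      · rw [AddMonoidAlgebra.coeff_modOf_of_not_exists_add _ _ _ ht]
        by_contra hp
        obtain ⟨s, -, hs⟩ := hg t (Finsupp.mem_support_iff.2 hp)
        exact ht ⟨s, hs⟩
    have hXh : toricMap k a (X n * h) = p := by
      rw [map_mul, aeval_X, hh]
      simpa [hmod] using AddMonoidAlgebra.divOf_add_modOf p (a n)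
    rw [← sub_add_cancel g (X n * h)]
    refine Submodule.add_mem_sup ?_ (Ideal.mem_span_singleton'.2 ⟨h, mul_comm _ _⟩)
    rw [mem_toricIdeal_iff, map_sub, hXh, sub_self]

theorem forall_X_mul_mem_imp_mem_iff_mapsTo (n m : Fin e) :
    (∀ g : MvPolynomial (Fin e) k, X m * g ∈ toricIdeal k a ⊔ Ideal.span {X n} →
      g ∈ toricIdeal k a ⊔ Ideal.span {X n}) ↔
    Set.MapsTo (a m + ·) (aperySet (AddSubmonoid.closure (Set.range a)) (a n))
      (aperySet (AddSubmonoid.closure (Set.range a)) (a n)) := by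
  simp only [mem_toricIdeal_sup_span_X_iff, support_toricMap_X_mul, Finset.forall_mem_map,
    addLeftEmbedding_apply]
  constructor
  · rintro H b ⟨hb, hbn⟩
    refine ⟨add_mem (AddSubmonoid.subset_closure ⟨m, rfl⟩) hb, fun hmb => hbn ?_⟩
    obtain ⟨g, hg⟩ := exists_toricMap_eq (k := k) (p := AddMonoidAlgebra.single b 1)
      (by simpa using hb)
    refine H g (fun t ht => ?_) b (by simp [hg])
    obtain rfl : t = b := by simpa [hg] using ht
    exact hmb
  · intro H g hg t ht
    by_contra hnot
    exact (H ⟨support_toricMap_subset g ht, hnot⟩).2 (hg t ht)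

theorem toricIdeal_sup_span_pair_ne_top {n m : Fin e} (hn : a n ≠ 0) (hm : a m ≠ 0) :
    toricIdeal k a ⊔ Ideal.span {X n, X m} ≠ ⊤ := by
  rw [Ne, Ideal.eq_top_iff_one]
  intro h1
  obtain ⟨f, hf, _, hx, hsum⟩ := Submodule.mem_sup.1 h1
  obtain ⟨g, h, rfl⟩ := Ideal.mem_span_pair.1 hx
  have := congrArg (fun p => (toricMap k a p).coeff 0) hsum
  simp [mem_toricIdeal_iff.1 hf, AddMonoidAlgebra.coeff_single_mul_of_forall_add_ne,
    mul_comm _ (X _), hn, hm] at this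

end ToricIdeal

theorem regular_sequence_iff_apery_general (k : Type*) [Field k] {e d : ℕ} (hde : d ≤ e)
    (a : Fin e → (Fin d → ℕ))
    (hE : LinearIndependent ℚ (fun t : Fin d => (fun s => (a (Fin.castLE hde t) s : ℚ))))
    (S : AddSubmonoid (Fin d → ℕ)) (hS : S = AddSubmonoid.closure (Set.range a))
    (i j : Fin d) (hij : i < j) :
    ((∀ g : MvPolynomial (Fin e) k,
        X (Fin.castLE hde i) * g ∈ toricIdeal k a → g ∈ toricIdeal k a) ∧
     (∀ g : MvPolynomial (Fin e) k,
        X (Fin.castLE hde j) * g ∈ toricIdeal k a ⊔ Ideal.span {X (Fin.castLE hde i)} →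
          g ∈ toricIdeal k a ⊔ Ideal.span {X (Fin.castLE hde i)}) ∧
     (toricIdeal k a ⊔
        Ideal.span {X (Fin.castLE hde i), X (Fin.castLE hde j)} ≠ ⊤)) ↔
    (∀ b₁ b₂ : Fin d → ℕ,
      (b₁ ∈ S ∧ (¬ ∃ s ∈ S, b₁ = a (Fin.castLE hde i) + s) ∧
        (¬ ∃ s ∈ S, b₁ = a (Fin.castLE hde j) + s)) →
      (b₂ ∈ S ∧ (¬ ∃ s ∈ S, b₂ = a (Fin.castLE hde i) + s) ∧
        (¬ ∃ s ∈ S, b₂ = a (Fin.castLE hde j) + s)) →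
      (∃ z₁ z₂ : ℤ, (fun t => (b₁ t : ℤ)) - (fun t => (b₂ t : ℤ)) =
        z₁ • (fun t => (a (Fin.castLE hde i) t : ℤ)) +
        z₂ • (fun t => (a (Fin.castLE hde j) t : ℤ))) →
      b₁ = b₂) := by
  subst hS
  have hpair : LinearIndependent ℚ ![fun t => (a (Fin.castLE hde i) t : ℚ),
      fun t => (a (Fin.castLE hde j) t : ℚ)] :=
    LinearIndependent.pair_iff.2 ((LinearIndepOn.pair_iff _ hij.ne).1 (hE.linearIndepOn _))
  have hxy := eq_zero_of_nsmul_add_nsmul_eq hpair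
  have hx0 : a (Fin.castLE hde i) ≠ 0 := fun h0 => one_ne_zero (hxy 1 0 0 (by simp [h0]))
  have hy0 := ne_zero_of_linearIndependent_pair hpair
  rw [and_iff_right fun g => mem_toricIdeal_of_X_mul_mem, and_iff_left
    (toricIdeal_sup_span_pair_ne_top hx0 hy0), forall_X_mul_mem_imp_mem_iff_mapsTo,
    mapsTo_add_aperySet_iff (AddSubmonoid.subset_closure (Set.mem_range_self _))
      (AddSubmonoid.subset_closure (Set.mem_range_self _)) hy0 hxy]
  simp only [mem_aperySet_inter_iff, exists_zsmul_add_zsmul_eq_sub_iff]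

/-- for a simplicial affine semigroup with extremal rays `a_1,…,a_d`
(ℚ-linearly independent) and `1 ≤ i < j ≤ d`, the pair `(x_i, x_j)` is a regular
sequence on `k[x]/I_A` if and only if any two elements of
`Ap(S, a_i) ∩ Ap(S, a_j)` differing by an element of `ℤ a_i + ℤ a_j` are equal. -/
theorem regular_sequence_iff_apery (k : Type*) [Field k] {e d : ℕ} (hde : d ≤ e)
    (hd : 2 ≤ d) (a : Fin e → (Fin d → ℕ))
    (hE : LinearIndependent ℚ (fun t : Fin d => (fun s => (a (Fin.castLE hde t) s : ℚ))))
    (S : AddSubmonoid (Fin d → ℕ)) (hS : S = AddSubmonoid.closure (Set.range a))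
    (i j : Fin d) (hij : i < j) :
    ((∀ g : MvPolynomial (Fin e) k,
        X (Fin.castLE hde i) * g ∈ toricIdeal k a → g ∈ toricIdeal k a) ∧
     (∀ g : MvPolynomial (Fin e) k,
        X (Fin.castLE hde j) * g ∈ toricIdeal k a ⊔ Ideal.span {X (Fin.castLE hde i)} →
          g ∈ toricIdeal k a ⊔ Ideal.span {X (Fin.castLE hde i)}) ∧
     (toricIdeal k a ⊔
        Ideal.span {X (Fin.castLE hde i), X (Fin.castLE hde j)} ≠ ⊤)) ↔
    (∀ b₁ b₂ : Fin d → ℕ,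
      (b₁ ∈ S ∧ (¬ ∃ s ∈ S, b₁ = a (Fin.castLE hde i) + s) ∧
        (¬ ∃ s ∈ S, b₁ = a (Fin.castLE hde j) + s)) →
      (b₂ ∈ S ∧ (¬ ∃ s ∈ S, b₂ = a (Fin.castLE hde i) + s) ∧
        (¬ ∃ s ∈ S, b₂ = a (Fin.castLE hde j) + s)) →
      (∃ z₁ z₂ : ℤ, (fun t => (b₁ t : ℤ)) - (fun t => (b₂ t : ℤ)) =
        z₁ • (fun t => (a (Fin.castLE hde i) t : ℤ)) +
        z₂ • (fun t => (a (Fin.castLE hde j) t : ℤ))) →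
      b₁ = b₂) :=
  regular_sequence_iff_apery_general k hde a hE S hS i j hij
end
end

section
/- Let S be a simplicial affine semigroup in ℕ^d with extremal rays E = {a_1,...,a_d}. If there exists b ∈ S such that the complex T_b is disconnected and has an isolated vertex a_l, then for the permutation with E' = E \ {a_l}, we have b ∉ Ap(S, E') and b - a_l ∈ Ap(S, E'); consequently Ap(S, E \ {a_l}) has a ⪯_S-maximal element. -/
/-!
Write `b = a_l + c`. Since `a_l` is isolated in `T_b`, no `a_i` with `i ≠ l` divides `c`, so
`c ∈ Ap(S, E')`, while `b` is divisible by a second vertex of `T_b`, so `b ∉ Ap(S, E')`.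
Every `x ∈ Ap(S, E')` is `k • a_l + w` with `w ∈ Ap(S, E)`. Two elements above `c` with the
same `w` must have the same `k`: otherwise the larger one is above `c + a_l = b` and leaves
`Ap(S, E')`. As `Ap(S, E)` is finite, only finitely many elements of `Ap(S, E')` lie above `c`,
and a maximal one among them is maximal in `Ap(S, E')`.
-/

/-- `i` is a vertex of `T_b`. -/
def isVertex {d : ℕ} (S : AddSubmonoid (Fin d → ℕ)) (a : Fin d → (Fin d → ℕ))
    (b : Fin d → ℕ) (i : Fin d) : Prop :=
  ∃ s ∈ S, b = a i + s

/-- `{i, j}` is an edge of `T_b`. -/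
def isEdge {d : ℕ} (S : AddSubmonoid (Fin d → ℕ)) (a : Fin d → (Fin d → ℕ))
    (b : Fin d → ℕ) (i j : Fin d) : Prop :=
  i ≠ j ∧ ∃ s ∈ S, b = a i + a j + s

/-- `T_b` is disconnected. -/
def TbDisconnected {d : ℕ} (S : AddSubmonoid (Fin d → ℕ)) (a : Fin d → (Fin d → ℕ))
    (b : Fin d → ℕ) : Prop :=
  ∃ i j, isVertex S a b i ∧ isVertex S a b j ∧
    ¬ Relation.ReflTransGen (isEdge S a b) i j

/-- `i` is an isolated vertex of `T_b`. -/
def isIsolated {d : ℕ} (S : AddSubmonoid (Fin d → ℕ)) (a : Fin d → (Fin d → ℕ))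
    (b : Fin d → ℕ) (i : Fin d) : Prop :=
  isVertex S a b i ∧ ∀ j, ¬ isEdge S a b i j

/-- Apéry set of `S` with respect to the rays indexed by `B`. -/
def aperyIdx {d : ℕ} (S : AddSubmonoid (Fin d → ℕ)) (a : Fin d → (Fin d → ℕ))
    (B : Finset (Fin d)) : Set (Fin d → ℕ) :=
  {x | x ∈ S ∧ ∀ i ∈ B, ¬ ∃ s ∈ S, x = a i + s}

/-- The semigroup order `u ⪯_S v`. -/
def semigroupLE {d : ℕ} (S : AddSubmonoid (Fin d → ℕ)) (u v : Fin d → ℕ) : Prop :=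
  ∃ s ∈ S, v = u + s

section SemigroupOrder

variable {d : ℕ} {S : AddSubmonoid (Fin d → ℕ)}

theorem semigroupLE_add_right {u s : Fin d → ℕ} (hs : s ∈ S) : semigroupLE S u (u + s) :=
  ⟨s, hs, rfl⟩

theorem semigroupLE_refl (u : Fin d → ℕ) : semigroupLE S u u :=
  ⟨0, S.zero_mem, (add_zero u).symm⟩

theorem semigroupLE.trans {u v w : Fin d → ℕ} :
    semigroupLE S u v → semigroupLE S v w → semigroupLE S u w := by
  rintro ⟨s, hs, rfl⟩ ⟨t, ht, rfl⟩
  exact ⟨s + t, S.add_mem hs ht, add_assoc _ _ _⟩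

theorem semigroupLE.add {u v u' v' : Fin d → ℕ} :
    semigroupLE S u v → semigroupLE S u' v' → semigroupLE S (u + u') (v + v') := by
  rintro ⟨s, hs, rfl⟩ ⟨t, ht, rfl⟩
  exact ⟨s + t, S.add_mem hs ht, add_add_add_comm _ _ _ _⟩

theorem semigroupLE.le {u v : Fin d → ℕ} (h : semigroupLE S u v) : u ≤ v := by
  obtain ⟨s, -, rfl⟩ := h
  exact le_self_add

theorem semigroupLE_nsmul {v : Fin d → ℕ} (hv : v ∈ S) {k : ℕ} (hk : 0 < k) :
    semigroupLE S v (k • v) := by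
  obtain ⟨j, rfl⟩ := Nat.exists_eq_add_of_lt hk
  rw [zero_add, succ_nsmul']
  exact semigroupLE_add_right (S.nsmul_mem hv j)

theorem exists_nsmul_add_not_semigroupLE {v : Fin d → ℕ} (hv : v ≠ 0) {x : Fin d → ℕ}
    (hx : x ∈ S) : ∃ k : ℕ, ∃ w ∈ S, x = k • v + w ∧ ¬ semigroupLE S v w := by
  induction x using WellFoundedLT.induction with
  | _ x ih =>
    by_cases hvx : semigroupLE S v x
    · obtain ⟨t, ht, rfl⟩ := hvx
      obtain ⟨k, w, hw, rfl, hvw⟩ :=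
        ih t (lt_add_of_pos_left t (pos_iff_ne_zero.mpr hv)) ht
      exact ⟨k + 1, w, hw, by rw [succ_nsmul', add_assoc], hvw⟩
    · exact ⟨0, x, hx, by rw [zero_nsmul, zero_add], hvx⟩

end SemigroupOrder

section Apery

variable {d : ℕ} {S : AddSubmonoid (Fin d → ℕ)} {a : Fin d → Fin d → ℕ}

theorem mem_aperyIdx_of_semigroupLE {B : Finset (Fin d)} {w x : Fin d → ℕ} (hw : w ∈ S)
    (hwx : semigroupLE S w x) (hx : x ∈ aperyIdx S a B) : w ∈ aperyIdx S a B :=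
  ⟨hw, fun i hi hiw => hx.2 i hi (semigroupLE.trans hiw hwx)⟩

theorem exists_nsmul_add_mem_aperyIdx_insert {B : Finset (Fin d)} {l : Fin d} (hal : a l ∈ S)
    (hl : a l ≠ 0) {x : Fin d → ℕ} (hx : x ∈ aperyIdx S a B) :
    ∃ k : ℕ, ∃ w ∈ aperyIdx S a (insert l B), x = k • a l + w := by
  obtain ⟨k, w, hw, rfl, hlw⟩ := exists_nsmul_add_not_semigroupLE hl hx.1
  have hwB : w ∈ aperyIdx S a B := mem_aperyIdx_of_semigroupLE hw
    (add_comm w (k • a l) ▸ semigroupLE_add_right (S.nsmul_mem hal k)) hx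
  refine ⟨k, w, ⟨hw, fun i hi => ?_⟩, rfl⟩
  rcases Finset.mem_insert.mp hi with rfl | hiB
  · exact hlw
  · exact hwB.2 i hiB

theorem not_lt_of_nsmul_add_mem_aperyIdx {B : Finset (Fin d)} {l : Fin d} (hal : a l ∈ S)
    {c w : Fin d → ℕ} (hc : c ∈ S) (hlc : a l + c ∉ aperyIdx S a B) {j k : ℕ}
    (hcj : semigroupLE S c (j • a l + w)) (hk : k • a l + w ∈ aperyIdx S a B) : ¬ j < k := by
  intro hjk
  have hsplit : k • a l + w = (k - j) • a l + (j • a l + w) := by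
    rw [← add_assoc, ← add_nsmul, Nat.sub_add_cancel hjk.le]
  refine hlc (mem_aperyIdx_of_semigroupLE (S.add_mem hal hc) ?_ hk)
  rw [hsplit]
  exact (semigroupLE_nsmul hal (Nat.sub_pos_of_lt hjk)).add hcj

theorem finite_setOf_mem_aperyIdx_of_semigroupLE {B : Finset (Fin d)} {l : Fin d}
    (hal : a l ∈ S) (hl : a l ≠ 0) (hfin : (aperyIdx S a (insert l B)).Finite)
    {c : Fin d → ℕ} (hc : c ∈ S) (hlc : a l + c ∉ aperyIdx S a B) :
    {x | x ∈ aperyIdx S a B ∧ semigroupLE S c x}.Finite := by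
  have hsub (w : Fin d → ℕ) : Set.Subsingleton
      {x | x ∈ aperyIdx S a B ∧ semigroupLE S c x ∧ ∃ k : ℕ, x = k • a l + w} := by
    rintro _ ⟨hx, hcx, j, rfl⟩ _ ⟨hy, hcy, k, rfl⟩
    rw [le_antisymm (not_lt.mp (not_lt_of_nsmul_add_mem_aperyIdx hal hc hlc hcy hx))
      (not_lt.mp (not_lt_of_nsmul_add_mem_aperyIdx hal hc hlc hcx hy))]
  refine (hfin.biUnion fun w _ => (hsub w).finite).subset ?_
  rintro x ⟨hx, hcx⟩
  obtain ⟨k, w, hw, rfl⟩ := exists_nsmul_add_mem_aperyIdx_insert hal hl hx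
  exact Set.mem_biUnion hw ⟨hx, hcx, k, rfl⟩

theorem exists_maximal_mem_aperyIdx {B : Finset (Fin d)} {c : Fin d → ℕ}
    (hc : c ∈ aperyIdx S a B) (hfin : {x | x ∈ aperyIdx S a B ∧ semigroupLE S c x}.Finite) :
    ∃ m ∈ aperyIdx S a B, ∀ x ∈ aperyIdx S a B, semigroupLE S m x → x = m := by
  obtain ⟨m, ⟨hm, hcm⟩, hmax⟩ := hfin.exists_maximal ⟨c, hc, semigroupLE_refl c⟩
  exact ⟨m, hm, fun x hx hmx => le_antisymm (hmax ⟨hx, hcm.trans hmx⟩ hmx.le) hmx.le⟩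

theorem exists_ne_isVertex_of_tbDisconnected {b : Fin d → ℕ} (h : TbDisconnected S a b)
    (l : Fin d) : ∃ i ≠ l, isVertex S a b i := by
  obtain ⟨i, j, hi, hj, hij⟩ := h
  by_cases hil : i = l
  · refine ⟨j, ?_, hj⟩
    rintro rfl
    exact hij (hil ▸ .refl)
  · exact ⟨i, hil, hi⟩

theorem mem_aperyIdx_compl_of_isIsolated {l : Fin d} {c : Fin d → ℕ}
    (h : isIsolated S a (a l + c) l) (hc : c ∈ S) : c ∈ aperyIdx S a {l}ᶜ :=
  ⟨hc, fun i hi ⟨t, ht, hct⟩ =>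
    h.2 i ⟨fun hli => Finset.mem_compl.mp hi (hli ▸ Finset.mem_singleton_self l), t, ht,
      by rw [hct, add_assoc]⟩⟩

end Apery

theorem apery_maximal_of_isolated_vertex_general {d : ℕ} (S : AddSubmonoid (Fin d → ℕ))
    (a : Fin d → (Fin d → ℕ)) (ha : ∀ i, a i ∈ S)
    (hE : LinearIndependent ℚ (fun i : Fin d => (fun t => (a i t : ℚ))))
    (hFin : (aperyIdx S a Finset.univ).Finite)
    (b : Fin d → ℕ) (hdisc : TbDisconnected S a b)
    (l : Fin d) (hiso : isIsolated S a b l) :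
    b ∉ aperyIdx S a {l}ᶜ ∧
    (∃ c ∈ aperyIdx S a {l}ᶜ, b = a l + c) ∧
    (∃ m ∈ aperyIdx S a {l}ᶜ, ∀ x ∈ aperyIdx S a {l}ᶜ, semigroupLE S m x → x = m) := by
  obtain ⟨c, hc, rfl⟩ := hiso.1
  have hl : a l ≠ 0 := fun h => hE.ne_zero l (funext fun t => by simp [h])
  obtain ⟨i, hil, hi⟩ := exists_ne_isVertex_of_tbDisconnected hdisc l
  have hb : a l + c ∉ aperyIdx S a {l}ᶜ := fun h => h.2 i (by simpa using hil) hi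
  have hcAp := mem_aperyIdx_compl_of_isIsolated hiso hc
  rw [← Finset.insert_compl_self l] at hFin
  exact ⟨hb, ⟨c, hcAp, rfl⟩, exists_maximal_mem_aperyIdx hcAp
    (finite_setOf_mem_aperyIdx_of_semigroupLE (ha l) hl hFin hc hb)⟩

/-- if `T_b` is disconnected with an isolated vertex `a_l`, then for
`E' = E \ {a_l}` one has `b ∉ Ap(S, E')` and `b - a_l ∈ Ap(S, E')`; consequently
`Ap(S, E \ {a_l})` has a `⪯_S`-maximal element. -/
theorem apery_maximal_of_isolated_vertex {d : ℕ} (S : AddSubmonoid (Fin d → ℕ))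
    (a : Fin d → (Fin d → ℕ)) (ha : ∀ i, a i ∈ S)
    (hE : LinearIndependent ℚ (fun i : Fin d => (fun t => (a i t : ℚ))))
    (hFin : (aperyIdx S a Finset.univ).Finite)
    (b : Fin d → ℕ) (hb : b ∈ S) (hdisc : TbDisconnected S a b)
    (l : Fin d) (hiso : isIsolated S a b l) :
    b ∉ aperyIdx S a {l}ᶜ ∧
    (∃ c ∈ aperyIdx S a {l}ᶜ, b = a l + c) ∧
    (∃ m ∈ aperyIdx S a {l}ᶜ, ∀ x ∈ aperyIdx S a {l}ᶜ, semigroupLE S m x → x = m) :=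
  apery_maximal_of_isolated_vertex_general S a ha hE hFin b hdisc l hiso
end
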